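/- (Two-firm case: closed-form minimal stayer probabilities.) Let q(d,z) ≥ 0 for d ∈ {0, L, H} and z ∈ {0,1} with Σ_{d ∈ {0,L,H}} q(d,z) = 1 for each z, and suppose q(0,1) ≤ q(0,0). Let Θ_I(LM) be the set of vectors p = (p_{(d,d')})_{(d,d') ∈ {0,L,H}²} with p_{(d,d')} ≥ 0, Σ p = 1, p_{(L,0)} = p_{(H,0)} = 0, and satisfying q(d,1) = Σ_{d' ∈ {0,L,H}} p_{(d',d)} and q(d,0) = Σ_{d' ∈ {0,L,H}} p_{(d,d')} for every d ∈ {0,L,H}. Then the minimum of p_{(H,H)} over Θ_I(LM) equals max{0, q(H,0) − q(L,1)}, and the minimum of p_{(L,L)} over Θ_I(LM) equals max{0, q(L,0) − q(H,1)}; moreover, for each fixed value of (p_{(H,H)}, p_{(L,L)}) consistent with Θ_I(LM), the remaining coordinates are determined by p_{(0,0)} = 1 − q(H,1) − q(L,1), p_{(0,L)} = q(L,1) − q(H,0) + p_{(H,H)} − p_{(L,L)}, p_{(0,H)} = q(H,1) − q(L,0) + p_{(L,L)} − p_{(H,H)}, p_{(L,H)} = q(L,0) − p_{(L,L)}, and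 p_{(H,L)} = q(H,0) − p_{(H,H)}. -/

import Mathlib

/-- The three layers in the two-firm setting: non-employment (`nul`),
low-type firms (`L`) and high-type firms (`H`). -/
inductive Layer : Type
  | nul : Layer
  | L : Layer
  | H : Layer
  deriving DecidableEq

instance : Fintype Layer :=
  ⟨{Layer.nul, Layer.L, Layer.H}, by intro x; cases x <;> simp⟩

/-- The identified set `Θ_I(LM)` in the two-firm setting: nonnegative
response-type probability vectors summing to one, satisfying monotonicity
(`p(L,0) = p(H,0) = 0`) and matching both propensity-score margins. -/
def ThetaLM (q : Layer → Fin 2 → ℝ) : Set (Layer × Layer → ℝ) :=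
  {p | (∀ t, 0 ≤ p t) ∧
       (∑ t : Layer × Layer, p t = 1) ∧
       p (Layer.L, Layer.nul) = 0 ∧ p (Layer.H, Layer.nul) = 0 ∧
       (∀ d, q d 1 = ∑ d' : Layer, p (d', d)) ∧
       (∀ d, q d 0 = ∑ d' : Layer, p (d, d'))}

/-!
Under monotonicity the six margin equations leave exactly two degrees of freedom, the stayer
probabilities `a = p(H,H)` and `b = p(L,L)`, and every other coordinate is an affine function
of them. Nonnegativity of those coordinates cuts out the constraints
`q(H,0) - q(L,1) ≤ a` and `q(L,0) - q(H,1) ≤ b` (read off the column margins through the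
movers `p(H,L)` and `p(L,H)`), so both bounds hold on all of `Θ_I(LM)`. They are attained
simultaneously by `a = max 0 (q(H,0) - q(L,1))`, `b = max 0 (q(L,0) - q(H,1))`: the remaining
nonnegativity constraints on `p(0,L)` and `p(0,H)` then reduce to
`q(L,0) + q(H,0) ≤ q(L,1) + q(H,1)`, which is `q(0,1) ≤ q(0,0)`.
-/

open Layer

theorem Layer.sum_univ {M : Type*} [AddCommMonoid M] (f : Layer → M) :
    ∑ d, f d = f nul + f L + f H := by
  simp [Finset.univ, Fintype.elems, add_assoc]

theorem max_zero_sub_le_sub_add_max_zero_sub {α : Type*} [Field α] [LinearOrder α]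
    [IsStrictOrderedRing α] {a b c d : α} (h : a + c ≤ b + d) :
    max 0 (c - d) ≤ b - a + max 0 (a - b) :=
  max_le (by linarith [le_max_right 0 (a - b)]) (by linarith [le_max_left 0 (a - b)])

def ThetaLM.ofStayers (q : Layer → Fin 2 → ℝ) (a b : ℝ) : Layer × Layer → ℝ
  | (nul, nul) => 1 - q H 1 - q L 1
  | (nul, L) => q L 1 - q H 0 + a - b
  | (nul, H) => q H 1 - q L 0 + b - a
  | (L, nul) => 0
  | (L, L) => b
  | (L, H) => q L 0 - b
  | (H, nul) => 0
  | (H, L) => q H 0 - a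
  | (H, H) => a

namespace ThetaLM

variable {q : Layer → Fin 2 → ℝ} {p : Layer × Layer → ℝ}

theorem eq_ofStayers (hp : p ∈ ThetaLM q) :
    p = ofStayers q (p (H, H)) (p (L, L)) := by
  obtain ⟨-, htot, hL0, hH0, hcol, hrow⟩ := hp
  simp only [sum_univ] at hcol hrow
  simp only [Fintype.sum_prod_type, sum_univ] at htot
  funext ⟨d, d'⟩
  cases d <;> cases d' <;> simp only [ofStayers] <;>
    linarith [hcol nul, hcol L, hcol H, hrow L, hrow H]

theorem sub_le_stayer_H (hp : p ∈ ThetaLM q) : q H 0 - q L 1 ≤ p (H, H) := by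
  obtain ⟨hnn, -, -, hH0, hcol, hrow⟩ := hp
  have hL1 := hcol L
  have hH := hrow H
  rw [sum_univ] at hL1 hH
  linarith [hnn (nul, L), hnn (L, L)]

theorem sub_le_stayer_L (hp : p ∈ ThetaLM q) : q L 0 - q H 1 ≤ p (L, L) := by
  obtain ⟨hnn, -, hL0, -, hcol, hrow⟩ := hp
  have hH1 := hcol H
  have hL := hrow L
  rw [sum_univ] at hH1 hL
  linarith [hnn (nul, H), hnn (H, H)]

theorem ofStayers_mem {a b : ℝ} (hsum : ∀ z, ∑ d : Layer, q d z = 1) (hq : 0 ≤ q nul 1)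
    (ha : 0 ≤ a) (hb : 0 ≤ b) (haH : a ≤ q H 0) (hbL : b ≤ q L 0)
    (hnulL : 0 ≤ q L 1 - q H 0 + a - b) (hnulH : 0 ≤ q H 1 - q L 0 + b - a) :
    ofStayers q a b ∈ ThetaLM q := by
  have h0 := hsum 0
  have h1 := hsum 1
  rw [sum_univ] at h0 h1
  have hrow : ∀ d, q d 0 = ∑ d', ofStayers q a b (d, d') := by
    intro d
    cases d <;> simp only [sum_univ, ofStayers] <;> linarith
  refine ⟨?_, ?_, rfl, rfl, ?_, hrow⟩
  · rintro ⟨d, d'⟩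
    cases d <;> cases d' <;> simp only [ofStayers] <;> linarith
  · rw [Fintype.sum_prod_type, ← Finset.sum_congr rfl fun d _ => hrow d]
    exact hsum 0
  · intro d
    cases d <;> simp only [sum_univ, ofStayers] <;> linarith

end ThetaLM

theorem two_firm_minimal_stayer_probabilities
    (q : Layer → Fin 2 → ℝ)
    (hq : ∀ d z, 0 ≤ q d z)
    (hsum : ∀ z, ∑ d : Layer, q d z = 1)
    (hmono : q Layer.nul 1 ≤ q Layer.nul 0) :
    IsLeast ((fun p => p (Layer.H, Layer.H)) '' ThetaLM q)
        (max 0 (q Layer.H 0 - q Layer.L 1)) ∧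
    IsLeast ((fun p => p (Layer.L, Layer.L)) '' ThetaLM q)
        (max 0 (q Layer.L 0 - q Layer.H 1)) ∧
    (∀ p ∈ ThetaLM q,
      p (Layer.nul, Layer.nul) = 1 - q Layer.H 1 - q Layer.L 1 ∧
      p (Layer.nul, Layer.L)
        = q Layer.L 1 - q Layer.H 0 + p (Layer.H, Layer.H) - p (Layer.L, Layer.L) ∧
      p (Layer.nul, Layer.H)
        = q Layer.H 1 - q Layer.L 0 + p (Layer.L, Layer.L) - p (Layer.H, Layer.H) ∧
      p (Layer.L, Layer.H) = q Layer.L 0 - p (Layer.L, Layer.L) ∧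
      p (Layer.H, Layer.L) = q Layer.H 0 - p (Layer.H, Layer.H)) := by
  have hemployment : q L 0 + q H 0 ≤ q L 1 + q H 1 := by
    have h0 := hsum 0
    have h1 := hsum 1
    rw [sum_univ] at h0 h1
    linarith
  have hmin : ThetaLM.ofStayers q (max 0 (q H 0 - q L 1)) (max 0 (q L 0 - q H 1)) ∈ ThetaLM q :=
    ThetaLM.ofStayers_mem hsum (hq nul 1) (le_max_left _ _) (le_max_left _ _)
      (max_le (hq H 0) (sub_le_self _ (hq L 1))) (max_le (hq L 0) (sub_le_self _ (hq H 1)))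
      (sub_nonneg.2 (max_zero_sub_le_sub_add_max_zero_sub (by linarith)))
      (sub_nonneg.2 (max_zero_sub_le_sub_add_max_zero_sub (by linarith)))
  refine ⟨⟨⟨_, hmin, rfl⟩, ?_⟩, ⟨⟨_, hmin, rfl⟩, ?_⟩, fun p hp => ?_⟩
  · rintro _ ⟨p, hp, rfl⟩
    exact max_le (hp.1 _) (ThetaLM.sub_le_stayer_H hp)
  · rintro _ ⟨p, hp, rfl⟩
    exact max_le (hp.1 _) (ThetaLM.sub_le_stayer_L hp)
  · have h := ThetaLM.eq_ofStayers hp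
    exact ⟨congrFun h _, congrFun h _, congrFun h _, congrFun h _, congrFun h _⟩
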